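/- (Progress) Let t be a closed, well-typed term of λ_SHACL, i.e., S, Γ ⊢ t : T, S' with t containing no free variables. Then t is either a value, or a term containing the stuck forms head nil or tail nil, or there exists a term t' such that t → t' under the small-step evaluation relation. -/
import Mathlib


/-! # λ_SHACL: a simply typed, call-by-value λ-calculus over an RDF/SHACL setting -/

/-- Node constants `v` (RDF nodes). -/
abbrev NodeId := String

/-- Shape-environment states `S` threaded through the typing judgment
    (a shape environment associating shape names with inferred information). -/
abbrev ShapeState := List (String × String)

/-- Types of λ_SHACL: the node (shape) type `s`, function types, list types,
    record types and booleans. -/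
inductive Ty : Type where
  | shape : Ty
  | arrow : Ty → Ty → Ty
  | list : Ty → Ty
  | record : List (String × Ty) → Ty
  | bool : Ty
deriving Repr

/-- Terms of λ_SHACL. -/
inductive Tm : Type where
  | var : String → Tm
  | node : NodeId → Tm                      -- node-value constant `v`
  | abs : String → Ty → Tm → Tm             -- λ(x:T).t
  | app : Tm → Tm → Tm
  | nil : Tm
  | cons : Tm → Tm → Tm
  | head : Tm → Tm
  | tail : Tm → Tm
  | record : List (String × Tm) → Tm        -- {lᵢ = tᵢ}
  | proj : Tm → String → Tm                 -- t.l
  | tt : Tm                                 -- true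
  | ff : Tm                                 -- false
  | ite : Tm → Tm → Tm → Tm
  | letIn : String → Tm → Tm → Tm
deriving Repr

/-- Values of λ_SHACL. -/
inductive Value : Tm → Prop where
  | node (v : NodeId) : Value (.node v)
  | abs (x : String) (T : Ty) (t : Tm) : Value (.abs x T t)
  | nil : Value .nil
  | cons {v₁ v₂ : Tm} : Value v₁ → Value v₂ → Value (.cons v₁ v₂)
  | record {fs : List (String × Tm)} : (∀ p ∈ fs, Value p.2) → Value (.record fs)
  | tt : Value .tt
  | ff : Value .ff

/-- Typing contexts `Γ`. -/
abbrev Ctx := List (String × Ty)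

/-- The typing judgment `S, Γ ⊢ t : T, S'`, threading the shape-environment
    state through the subterms, with the standard rule for each construct. -/
inductive Typing : ShapeState → Ctx → Tm → Ty → ShapeState → Prop where
  | var {S Γ x T} :
      List.lookup x Γ = some T → Typing S Γ (.var x) T S
  | node {S Γ} (v : NodeId) : Typing S Γ (.node v) .shape S
  | abs {S S' Γ x T₁ t T₂} :
      Typing S ((x, T₁) :: Γ) t T₂ S' →
      Typing S Γ (.abs x T₁ t) (.arrow T₁ T₂) S
  | app {S S₁ S₂ Γ t₁ t₂ T₁ T₂} :
      Typing S Γ t₁ (.arrow T₁ T₂) S₁ →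
      Typing S₁ Γ t₂ T₁ S₂ →
      Typing S Γ (.app t₁ t₂) T₂ S₂
  | nil {S Γ T} : Typing S Γ .nil (.list T) S
  | cons {S S₁ S₂ Γ t₁ t₂ T} :
      Typing S Γ t₁ T S₁ →
      Typing S₁ Γ t₂ (.list T) S₂ →
      Typing S Γ (.cons t₁ t₂) (.list T) S₂
  | head {S S' Γ t T} :
      Typing S Γ t (.list T) S' →
      Typing S Γ (.head t) T S'
  | tail {S S' Γ t T} :
      Typing S Γ t (.list T) S' →
      Typing S Γ (.tail t) (.list T) S'
  | record {S Γ} {fs : List (String × Tm)} {Ts : List (String × Ty)} :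
      fs.length = Ts.length →
      fs.map Prod.fst = Ts.map Prod.fst →
      (∀ i : ℕ, ∀ h₁ : i < fs.length, ∀ h₂ : i < Ts.length,
        Typing S Γ (fs.get ⟨i, h₁⟩).2 (Ts.get ⟨i, h₂⟩).2 S) →
      Typing S Γ (.record fs) (.record Ts) S
  | proj {S S' Γ t Ts l T} :
      Typing S Γ t (.record Ts) S' →
      List.lookup l Ts = some T →
      Typing S Γ (.proj t l) T S'
  | tt {S Γ} : Typing S Γ .tt .bool S
  | ff {S Γ} : Typing S Γ .ff .bool S
  | ite {S S₁ S₂ Γ c t₁ t₂ T} :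
      Typing S Γ c .bool S₁ →
      Typing S₁ Γ t₁ T S₂ →
      Typing S₁ Γ t₂ T S₂ →
      Typing S Γ (.ite c t₁ t₂) T S₂
  | letIn {S S₁ S₂ Γ x t₁ T₁ t₂ T₂} :
      Typing S Γ t₁ T₁ S₁ →
      Typing S₁ ((x, T₁) :: Γ) t₂ T₂ S₂ →
      Typing S Γ (.letIn x t₁ t₂) T₂ S₂

mutual
/-- Substitution `[x ↦ s] t` of `s` for the free variable `x` in `t`. -/
def subst (x : String) (s : Tm) : Tm → Tm
  | .var y => if y = x then s else .var y
  | .node v => .node v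
  | .abs y T t => .abs y T (if y = x then t else subst x s t)
  | .app t₁ t₂ => .app (subst x s t₁) (subst x s t₂)
  | .nil => .nil
  | .cons t₁ t₂ => .cons (subst x s t₁) (subst x s t₂)
  | .head t => .head (subst x s t)
  | .tail t => .tail (subst x s t)
  | .record fs => .record (substFields x s fs)
  | .proj t l => .proj (subst x s t) l
  | .tt => .tt
  | .ff => .ff
  | .ite c t₁ t₂ => .ite (subst x s c) (subst x s t₁) (subst x s t₂)
  | .letIn y t₁ t₂ =>
      .letIn y (subst x s t₁) (if y = x then t₂ else subst x s t₂)

/-- Substitution on record fields. -/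
def substFields (x : String) (s : Tm) : List (String × Tm) → List (String × Tm)
  | [] => []
  | (l, t) :: fs => (l, subst x s t) :: substFields x s fs
end

mutual
/-- The free variables of a term. -/
def freeVars : Tm → List String
  | .var y => [y]
  | .node _ => []
  | .abs y _ t => (freeVars t).filter (· ≠ y)
  | .app t₁ t₂ => freeVars t₁ ++ freeVars t₂
  | .nil => []
  | .cons t₁ t₂ => freeVars t₁ ++ freeVars t₂
  | .head t => freeVars t
  | .tail t => freeVars t
  | .record fs => freeVarsFields fs
  | .proj t _ => freeVars t
  | .tt => []
  | .ff => []
  | .ite c t₁ t₂ => freeVars c ++ freeVars t₁ ++ freeVars t₂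
  | .letIn y t₁ t₂ => freeVars t₁ ++ (freeVars t₂).filter (· ≠ y)

/-- The free variables of record fields. -/
def freeVarsFields : List (String × Tm) → List String
  | [] => []
  | (_, t) :: fs => freeVars t ++ freeVarsFields fs
end

/-- A term is closed if it has no free variables. -/
def Closed (t : Tm) : Prop := freeVars t = []

/-- The small-step, call-by-value evaluation relation `t → t'`. -/
inductive Step : Tm → Tm → Prop where
  | beta {x T t v} : Value v → Step (.app (.abs x T t) v) (subst x v t)
  | app₁ {t₁ t₁' t₂} : Step t₁ t₁' → Step (.app t₁ t₂) (.app t₁' t₂)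
  | app₂ {v t₂ t₂'} : Value v → Step t₂ t₂' → Step (.app v t₂) (.app v t₂')
  | cons₁ {t₁ t₁' t₂} : Step t₁ t₁' → Step (.cons t₁ t₂) (.cons t₁' t₂)
  | cons₂ {v t₂ t₂'} : Value v → Step t₂ t₂' → Step (.cons v t₂) (.cons v t₂')
  | headCons {v₁ v₂} : Value v₁ → Value v₂ → Step (.head (.cons v₁ v₂)) v₁
  | headCong {t t'} : Step t t' → Step (.head t) (.head t')
  | tailCons {v₁ v₂} : Value v₁ → Value v₂ → Step (.tail (.cons v₁ v₂)) v₂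
  | tailCong {t t'} : Step t t' → Step (.tail t) (.tail t')
  | recordCong {vs : List (String × Tm)} {l t t' ts} :
      (∀ p ∈ vs, Value p.2) → Step t t' →
      Step (.record (vs ++ (l, t) :: ts)) (.record (vs ++ (l, t') :: ts))
  | projRecord {fs : List (String × Tm)} {l v} :
      (∀ p ∈ fs, Value p.2) → List.lookup l fs = some v →
      Step (.proj (.record fs) l) v
  | projCong {t t' l} : Step t t' → Step (.proj t l) (.proj t' l)
  | iteTrue {t₁ t₂} : Step (.ite .tt t₁ t₂) t₁
  | iteFalse {t₁ t₂} : Step (.ite .ff t₁ t₂) t₂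
  | iteCong {c c' t₁ t₂} : Step c c' → Step (.ite c t₁ t₂) (.ite c' t₁ t₂)
  | letV {x v t₂} : Value v → Step (.letIn x v t₂) (subst x v t₂)
  | letCong {x t₁ t₁' t₂} : Step t₁ t₁' → Step (.letIn x t₁ t₂) (.letIn x t₁' t₂)

/-- `t` is an immediate subterm of `t'`. -/
inductive DirectSub : Tm → Tm → Prop where
  | absBody {x T t} : DirectSub t (.abs x T t)
  | appFn {t₁ t₂} : DirectSub t₁ (.app t₁ t₂)
  | appArg {t₁ t₂} : DirectSub t₂ (.app t₁ t₂)
  | consHd {t₁ t₂} : DirectSub t₁ (.cons t₁ t₂)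
  | consTl {t₁ t₂} : DirectSub t₂ (.cons t₁ t₂)
  | headArg {t} : DirectSub t (.head t)
  | tailArg {t} : DirectSub t (.tail t)
  | recordField {fs : List (String × Tm)} {l t} :
      (l, t) ∈ fs → DirectSub t (.record fs)
  | projArg {t l} : DirectSub t (.proj t l)
  | iteCond {c t₁ t₂} : DirectSub c (.ite c t₁ t₂)
  | iteThen {c t₁ t₂} : DirectSub t₁ (.ite c t₁ t₂)
  | iteElse {c t₁ t₂} : DirectSub t₂ (.ite c t₁ t₂)
  | letBound {x t₁ t₂} : DirectSub t₁ (.letIn x t₁ t₂)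
  | letBody {x t₁ t₂} : DirectSub t₂ (.letIn x t₁ t₂)

/-- `t` is a (reflexive-transitive) subterm of `t'`. -/
def Subterm : Tm → Tm → Prop := Relation.ReflTransGen DirectSub

/-- `t` contains one of the stuck forms `head nil` or `tail nil`. -/
def ContainsStuck (t : Tm) : Prop :=
  Subterm (.head .nil) t ∨ Subterm (.tail .nil) t


/-- Lift `ContainsStuck` along an immediate subterm. -/
lemma containsStuck_lift {t t' : Tm} (h : ContainsStuck t) (hsub : DirectSub t t') :
    ContainsStuck t' := by
  rcases h with h | h
  · exact Or.inl (Relation.ReflTransGen.tail h hsub)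
  · exact Or.inr (Relation.ReflTransGen.tail h hsub)

lemma canon_arrow {S S' Γ t T₁ T₂} (hv : Value t)
    (hty : Typing S Γ t (.arrow T₁ T₂) S') : ∃ x T b, t = .abs x T b := by
  cases hv <;> cases hty
  exact ⟨_, _, _, rfl⟩

lemma canon_list {S S' Γ t T} (hv : Value t)
    (hty : Typing S Γ t (.list T) S') :
    t = .nil ∨ ∃ v₁ v₂, t = .cons v₁ v₂ ∧ Value v₁ ∧ Value v₂ := by
  cases hv <;> cases hty
  · exact Or.inl rfl
  · exact Or.inr ⟨_, _, rfl, by assumption, by assumption⟩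

lemma canon_bool {S S' Γ t} (hv : Value t)
    (hty : Typing S Γ t .bool S') : t = .tt ∨ t = .ff := by
  cases hv <;> cases hty
  · exact Or.inl rfl
  · exact Or.inr rfl

lemma canon_record {S S' Γ t Ts} (hv : Value t)
    (hty : Typing S Γ t (.record Ts) S') :
    ∃ fs : List (String × Tm), t = .record fs ∧ (∀ p ∈ fs, Value p.2) ∧
      fs.map Prod.fst = Ts.map Prod.fst := by
  cases hv <;> cases hty
  exact ⟨_, rfl, by assumption, by assumption⟩

lemma lookup_of_map_fst_eq {l : String} {T : Ty} :
    ∀ {fs : List (String × Tm)} {Ts : List (String × Ty)},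
    fs.map Prod.fst = Ts.map Prod.fst → List.lookup l Ts = some T →
    ∃ v, List.lookup l fs = some v := by
  intro fs
  induction fs with
  | nil => intro Ts h hl; cases Ts <;> simp_all [List.lookup]
  | cons p fs ih =>
    intro Ts h hl
    cases Ts with
    | nil => simp at h
    | cons q Ts =>
      simp at h
      obtain ⟨h1, h2⟩ := h
      by_cases hx : l = p.1
      · exact ⟨p.2, by simp [List.lookup, show (l == p.1) = true from beq_iff_eq.mpr hx]⟩
      · have hb : (l == q.1) = false := beq_eq_false_iff_ne.mpr (h1 ▸ hx)
        have hb' : (l == p.1) = false := beq_eq_false_iff_ne.mpr hx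
        rw [List.lookup, hb] at hl
        obtain ⟨v, hv⟩ := ih h2 hl
        exact ⟨v, by rw [List.lookup, hb']; exact hv⟩

lemma record_split (fs : List (String × Tm)) :
    (∀ p ∈ fs, Value p.2) ∨
    ∃ vs l t ts, fs = vs ++ (l, t) :: ts ∧ (∀ p ∈ vs, Value p.2) ∧ ¬ Value t := by
  induction fs with
  | nil => exact Or.inl (by simp)
  | cons p fs ih =>
    by_cases hv : Value p.2
    · rcases ih with h | ⟨vs, l, t, ts, rfl, hvs, hnv⟩
      · refine Or.inl ?_
        intro q hq; rw [List.mem_cons] at hq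
        rcases hq with rfl | hq
        · exact hv
        · exact h q hq
      · refine Or.inr ⟨p :: vs, l, t, ts, rfl, ?_, hnv⟩
        intro q hq; rw [List.mem_cons] at hq
        rcases hq with rfl | hq
        · exact hv
        · exact hvs q hq
    · exact Or.inr ⟨[], p.1, p.2, fs, rfl, by simp, hv⟩

lemma closed_record_field {fs : List (String × Tm)} {l t}
    (h : freeVarsFields fs = []) (hm : (l, t) ∈ fs) : Closed t := by
  induction fs with
  | nil => simp at hm
  | cons p fs ih =>
    cases p with
    | mk l' t' =>
      rw [freeVarsFields] at h
      have h1 : freeVars t' = [] := by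
        cases e : freeVars t' <;> simp_all
      have h2 : freeVarsFields fs = [] := by
        cases e : freeVarsFields fs <;> simp_all
      rw [List.mem_cons] at hm
      rcases hm with hm | hm
      · cases hm; exact h1
      · exact ih h2 hm

/-- Progress: a closed, well-typed term is either a value, a term containing the
    stuck forms `head nil` or `tail nil`, or it can take an evaluation step. -/
theorem progress {S S' : ShapeState} {Γ : Ctx} {t : Tm} {T : Ty}
    (hclosed : Closed t) (hty : Typing S Γ t T S') :
    Value t ∨ ContainsStuck t ∨ ∃ t', Step t t' := by
  revert hclosed
  induction hty with
  | var h =>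
    intro hcl
    exfalso; simp [Closed, freeVars] at hcl
  | node v => intro _; exact Or.inl (Value.node v)
  | abs _ _ => intro _; exact Or.inl (Value.abs _ _ _)
  | @app S S₁ S₂ Γ t₁ t₂ T₁ T₂ hty₁ hty₂ ih₁ ih₂ =>
    intro hcl
    have hc : freeVars t₁ = [] ∧ freeVars t₂ = [] := by
      have := hcl; simp [Closed, freeVars] at this; exact this
    rcases ih₁ hc.1 with hv₁ | hs | ⟨t₁', hst⟩
    · rcases ih₂ hc.2 with hv₂ | hs | ⟨t₂', hst⟩
      · obtain ⟨x, T, b, rfl⟩ := canon_arrow hv₁ hty₁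
        exact Or.inr (Or.inr ⟨_, Step.beta hv₂⟩)
      · exact Or.inr (Or.inl (containsStuck_lift hs DirectSub.appArg))
      · exact Or.inr (Or.inr ⟨_, Step.app₂ hv₁ hst⟩)
    · exact Or.inr (Or.inl (containsStuck_lift hs DirectSub.appFn))
    · exact Or.inr (Or.inr ⟨_, Step.app₁ hst⟩)
  | nil => intro _; exact Or.inl Value.nil
  | @cons S S₁ S₂ Γ t₁ t₂ T hty₁ hty₂ ih₁ ih₂ =>
    intro hcl
    have hc : freeVars t₁ = [] ∧ freeVars t₂ = [] := by
      have := hcl; simp [Closed, freeVars] at this; exact this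
    rcases ih₁ hc.1 with hv₁ | hs | ⟨t₁', hst⟩
    · rcases ih₂ hc.2 with hv₂ | hs | ⟨t₂', hst⟩
      · exact Or.inl (Value.cons hv₁ hv₂)
      · exact Or.inr (Or.inl (containsStuck_lift hs DirectSub.consTl))
      · exact Or.inr (Or.inr ⟨_, Step.cons₂ hv₁ hst⟩)
    · exact Or.inr (Or.inl (containsStuck_lift hs DirectSub.consHd))
    · exact Or.inr (Or.inr ⟨_, Step.cons₁ hst⟩)
  | @head S S' Γ t T hty ih =>
    intro hcl
    have hc : freeVars t = [] := by
      have := hcl; simp [Closed, freeVars] at this; exact this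
    rcases ih hc with hv | hs | ⟨t', hst⟩
    · rcases canon_list hv hty with rfl | ⟨v₁, v₂, rfl, hv₁, hv₂⟩
      · exact Or.inr (Or.inl (Or.inl Relation.ReflTransGen.refl))
      · exact Or.inr (Or.inr ⟨_, Step.headCons hv₁ hv₂⟩)
    · exact Or.inr (Or.inl (containsStuck_lift hs DirectSub.headArg))
    · exact Or.inr (Or.inr ⟨_, Step.headCong hst⟩)
  | @tail S S' Γ t T hty ih =>
    intro hcl
    have hc : freeVars t = [] := by
      have := hcl; simp [Closed, freeVars] at this; exact this
    rcases ih hc with hv | hs | ⟨t', hst⟩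
    · rcases canon_list hv hty with rfl | ⟨v₁, v₂, rfl, hv₁, hv₂⟩
      · exact Or.inr (Or.inl (Or.inr Relation.ReflTransGen.refl))
      · exact Or.inr (Or.inr ⟨_, Step.tailCons hv₁ hv₂⟩)
    · exact Or.inr (Or.inl (containsStuck_lift hs DirectSub.tailArg))
    · exact Or.inr (Or.inr ⟨_, Step.tailCong hst⟩)
  | @record S Γ fs Ts hlen hmap htys ih =>
    intro hcl
    rcases record_split fs with hall | ⟨vs, l, t, ts, hsplit, hvs, hnv⟩
    · exact Or.inl (Value.record hall)
    · have hmem : (l, t) ∈ fs := by rw [hsplit]; simp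
      have hct : Closed t := by
        have := hcl; simp [Closed, freeVars] at this
        exact closed_record_field this hmem
      have hi₁ : vs.length < fs.length := by
        rw [hsplit]; simp
      have hi₂ : vs.length < Ts.length := hlen ▸ hi₁
      have hget : fs.get ⟨vs.length, hi₁⟩ = (l, t) := by
        subst hsplit
        simp [List.get_eq_getElem, List.getElem_append_right]
      rcases ih vs.length hi₁ hi₂ (hget ▸ hct) with hv | hs | ⟨t', hst⟩
      · rw [hget] at hv; exact absurd hv hnv
      · rw [hget] at hs
        exact Or.inr (Or.inl (containsStuck_lift hs (DirectSub.recordField hmem)))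
      · rw [hget] at hst
        rw [hsplit]
        exact Or.inr (Or.inr ⟨_, Step.recordCong hvs hst⟩)
  | @proj S S' Γ t Ts l T hty hlook ih =>
    intro hcl
    have hc : freeVars t = [] := by
      have := hcl; simp [Closed, freeVars] at this; exact this
    rcases ih hc with hv | hs | ⟨t', hst⟩
    · obtain ⟨fs, rfl, hvals, hm⟩ := canon_record hv hty
      obtain ⟨v, hv'⟩ := lookup_of_map_fst_eq hm hlook
      exact Or.inr (Or.inr ⟨v, Step.projRecord hvals hv'⟩)
    · exact Or.inr (Or.inl (containsStuck_lift hs DirectSub.projArg))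
    · exact Or.inr (Or.inr ⟨_, Step.projCong hst⟩)
  | tt => intro _; exact Or.inl Value.tt
  | ff => intro _; exact Or.inl Value.ff
  | @ite S S₁ S₂ Γ c t₁ t₂ T htyc hty₁ hty₂ ihc ih₁ ih₂ =>
    intro hcl
    have hc : freeVars c = [] := by
      have := hcl; simp [Closed, freeVars] at this; tauto
    rcases ihc hc with hv | hs | ⟨c', hst⟩
    · rcases canon_bool hv htyc with rfl | rfl
      · exact Or.inr (Or.inr ⟨_, Step.iteTrue⟩)
      · exact Or.inr (Or.inr ⟨_, Step.iteFalse⟩)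
    · exact Or.inr (Or.inl (containsStuck_lift hs DirectSub.iteCond))
    · exact Or.inr (Or.inr ⟨_, Step.iteCong hst⟩)
  | @letIn S S₁ S₂ Γ x t₁ T₁ t₂ T₂ hty₁ hty₂ ih₁ ih₂ =>
    intro hcl
    have hc : freeVars t₁ = [] := by
      have := hcl; simp [Closed, freeVars] at this; tauto
    rcases ih₁ hc with hv | hs | ⟨t₁', hst⟩
    · exact Or.inr (Or.inr ⟨_, Step.letV hv⟩)
    · exact Or.inr (Or.inl (containsStuck_lift hs DirectSub.letBound))
    · exact Or.inr (Or.inr ⟨_, Step.letCong hst⟩)
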